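/- arXiv:1904.05195 — 2 statements merged into one kernel-verified Lean document; each statement's English description precedes it below -/
import Mathlib

section
/- Let F = H* T H be a factorization of a bounded operator through an injective bounded operator H : X → Y and a bounded operator T : Y → Y satisfying Re⟨Tv,v⟩ ≥ c‖v‖² − ⟨Kv,v⟩ for a compact self-adjoint K and c > 0, restricted to the closure of the range of H. If moreover Im⟨Tv,v⟩ > 0 for all nonzero v in the closure of the range of H, then F is injective. -/
open ContinuousLinearMap

/-- Factorization `F = H* T H` with `H` injective, `T` satisfying a Gårding-type
coercivity inequality up to a compact self-adjoint perturbation `K` on the closure of the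
range of `H`, and `Im⟨Tv,v⟩ > 0` for nonzero `v` in that closure, implies that `F` is
injective. (Inner products are written in the convention linear in the first argument,
i.e. the paper's `⟨Tv,v⟩` is Mathlib's `⟪v, T v⟫`.) -/
theorem factorization_injective
    {X Y : Type*} [NormedAddCommGroup X] [InnerProductSpace ℂ X] [CompleteSpace X]
    [NormedAddCommGroup Y] [InnerProductSpace ℂ Y] [CompleteSpace Y]
    (Hop : X →L[ℂ] Y) (T K : Y →L[ℂ] Y) (c : ℝ) (hc : 0 < c)
    (hHinj : Function.Injective ⇑Hop)
    (hKcpt : IsCompactOperator ⇑K) (hKsa : IsSelfAdjoint K)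
    (hcoer : ∀ v ∈ closure (Set.range ⇑Hop),
      c * ‖v‖ ^ 2 - (inner ℂ (K v) v : ℂ).re ≤ (inner ℂ v (T v) : ℂ).re)
    (him : ∀ v ∈ closure (Set.range ⇑Hop), v ≠ 0 → 0 < (inner ℂ v (T v) : ℂ).im) :
    Function.Injective ⇑(adjoint Hop ∘L T ∘L Hop) := by
  rw [injective_iff_map_eq_zero]
  intro x hx
  have hzero : (inner ℂ (Hop x) (T (Hop x)) : ℂ) = 0 := by
    have : (inner ℂ (Hop x) (T (Hop x)) : ℂ) = inner ℂ x ((adjoint Hop ∘L T ∘L Hop) x) := by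
      simp [ContinuousLinearMap.adjoint_inner_right]
    rw [this, hx, inner_zero_right]
  by_contra hxne
  have hHx : Hop x ≠ 0 := fun h => hxne (hHinj (by simpa using h))
  have hmem : Hop x ∈ closure (Set.range ⇑Hop) :=
    subset_closure ⟨x, rfl⟩
  have := him (Hop x) hmem hHx
  rw [hzero] at this
  simp at this
end

section
/- Let (v₀, w₀) ∈ L²(Ω) × H²₀(Ω) be a nonzero solution of the system Δw₀ + k₀²n w₀ = k₀²(n_b − n)v₀ and Δv₀ + ρ v₀ = 0 in Ω (with k₀²n_b = ρ). Then ∫_Ω (n − n_b)(v₀ + w₀) v̄₀ dx = 0. -/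
open MeasureTheory

/-- Pointwise Laplacian of a complex-valued function on `ℝ³`. -/
noncomputable def lap3 (f : EuclideanSpace ℝ (Fin 3) → ℂ)
    (x : EuclideanSpace ℝ (Fin 3)) : ℂ :=
  ∑ i : Fin 3, fderiv ℝ (fun y => fderiv ℝ f y (EuclideanSpace.single i 1)) x
      (EuclideanSpace.single i 1)

namespace TransmissionAux

abbrev E3 := EuclideanSpace ℝ (Fin 3)

lemma csupp_mul_int {f g : E3 → ℂ} (hf : Continuous f) (hg : Continuous g)
    (hfc : HasCompactSupport f) : Integrable (fun x => f x * g x) :=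
  (hf.mul hg).integrable_of_hasCompactSupport (hfc.mul_right)

lemma mul_csupp_int {f g : E3 → ℂ} (hf : Continuous f) (hg : Continuous g)
    (hgc : HasCompactSupport g) : Integrable (fun x => f x * g x) :=
  (hf.mul hg).integrable_of_hasCompactSupport (hgc.mul_left)

lemma fderiv_apply_contDiff_one {f : E3 → ℂ} (hf : ContDiff ℝ 2 f) (v : E3) :
    ContDiff ℝ 1 (fun y => fderiv ℝ f y v) :=
  (hf.fderiv_right (m := 1) (by norm_num)).clm_apply contDiff_const

lemma fderiv2_apply_continuous {f : E3 → ℂ} (hf : ContDiff ℝ 2 f) (v : E3) :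
    Continuous (fun x => fderiv ℝ (fun y => fderiv ℝ f y v) x v) :=
  (((fderiv_apply_contDiff_one hf v).fderiv_right (m := 0)
    (by norm_num)).clm_apply contDiff_const).continuous

/-- Integration by parts twice, for `f` compactly supported `C²` and `g` `C²`. -/
lemma ibp2 {f g : E3 → ℂ} (hf : ContDiff ℝ 2 f) (hfc : HasCompactSupport f)
    (hg : ContDiff ℝ 2 g) (v : E3) :
    ∫ x, fderiv ℝ (fun y => fderiv ℝ f y v) x v * g x
      = ∫ x, f x * fderiv ℝ (fun y => fderiv ℝ g y v) x v := by
  have hf1 : ContDiff ℝ 1 (fun y => fderiv ℝ f y v) := fderiv_apply_contDiff_one hf v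
  have hg1 : ContDiff ℝ 1 (fun y => fderiv ℝ g y v) := fderiv_apply_contDiff_one hg v
  have hF1c : HasCompactSupport (fun y => fderiv ℝ f y v) := hfc.fderiv_apply ℝ v
  have hF2c : HasCompactSupport
      (fun x => fderiv ℝ (fun y => fderiv ℝ f y v) x v) := hF1c.fderiv_apply ℝ v
  have step1 : ∫ x, (fun y => fderiv ℝ f y v) x * fderiv ℝ g x v
      = - ∫ x, fderiv ℝ (fun y => fderiv ℝ f y v) x v * g x := by
    exact integral_mul_fderiv_eq_neg_fderiv_mul_of_integrable
      (csupp_mul_int (fderiv2_apply_continuous hf v) hg.continuous hF2c)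
      (csupp_mul_int hf1.continuous hg1.continuous hF1c)
      (csupp_mul_int hf1.continuous hg.continuous hF1c)
      (fun x _ => hf1.differentiable one_ne_zero x) (fun x _ => hg.differentiable (by norm_num) x)
  have step2 : ∫ x, f x * fderiv ℝ (fun y => fderiv ℝ g y v) x v
      = - ∫ x, fderiv ℝ f x v * (fun y => fderiv ℝ g y v) x := by
    exact integral_mul_fderiv_eq_neg_fderiv_mul_of_integrable
      (csupp_mul_int hf1.continuous hg1.continuous hF1c)
      (csupp_mul_int hf.continuous (fderiv2_apply_continuous hg v) hfc)
      (csupp_mul_int hf.continuous hg1.continuous hfc)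
      (fun x _ => hf.differentiable (by norm_num) x) (fun x _ => hg1.differentiable one_ne_zero x)
  simp only at step1 step2
  rw [step2, step1, neg_neg]

lemma fderiv_apply_star (f : E3 → ℂ) (x v : E3) :
    fderiv ℝ (fun y => star (f y)) x v = star (fderiv ℝ f x v) := by
  rw [fderiv_star]; simp

lemma lap3_star (f : E3 → ℂ) (x : E3) :
    lap3 (fun y => star (f y)) x = star (lap3 f x) := by
  unfold lap3
  rw [star_sum]
  refine Finset.sum_congr rfl fun i _ => ?_
  have h1 : (fun y => fderiv ℝ (fun z => star (f z)) y (EuclideanSpace.single i 1))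
      = fun y => star (fderiv ℝ f y (EuclideanSpace.single i 1)) := by
    funext y; exact fderiv_apply_star f y _
  rw [h1, fderiv_apply_star]

end TransmissionAux

open TransmissionAux in
/-- If `(v₀, w₀)` is a nonzero solution of the interior transmission system
`Δw₀ + k₀²n w₀ = k₀²(n_b − n)v₀` and `Δv₀ + ρ v₀ = 0` in `Ω`, with `k₀² n_b = ρ`,
then `∫_Ω (n − n_b)(v₀ + w₀) v̄₀ = 0`. -/
theorem transmission_eigenpair_orthogonality
    (Ω : Set (EuclideanSpace ℝ (Fin 3))) (hΩopen : IsOpen Ω)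
    (hΩbdd : Bornology.IsBounded Ω)
    (n : EuclideanSpace ℝ (Fin 3) → ℝ) (hn : Measurable n)
    (hnbdd : ∃ C : ℝ, ∀ x, |n x| ≤ C)
    (k₀ ρ nb : ℝ) (hk₀ : 0 < k₀) (hnb : k₀ ^ 2 * nb = ρ)
    (v₀ w₀ : EuclideanSpace ℝ (Fin 3) → ℂ)
    (hv₀reg : ContDiff ℝ 2 v₀)
    (hw₀reg : ContDiff ℝ 2 w₀) (hw₀supp : HasCompactSupport w₀)
    (hw₀in : tsupport w₀ ⊆ Ω)
    (hnonzero : ∃ x ∈ Ω, v₀ x ≠ 0 ∨ w₀ x ≠ 0)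
    (hpde1 : ∀ x ∈ Ω, lap3 w₀ x + (k₀ ^ 2 * n x : ℝ) * w₀ x =
      (k₀ ^ 2 * (nb - n x) : ℝ) * v₀ x)
    (hpde2 : ∀ x ∈ Ω, lap3 v₀ x + (ρ : ℂ) * v₀ x = 0)
    (hint : IntegrableOn
      (fun x => ((n x - nb : ℝ) : ℂ) * (v₀ x + w₀ x) * starRingEnd ℂ (v₀ x)) Ω) :
    ∫ x in Ω, ((n x - nb : ℝ) : ℂ) * (v₀ x + w₀ x) * starRingEnd ℂ (v₀ x) = 0 := by
  classical
  set u : E3 → ℂ := fun y => star (v₀ y) with hu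
  have hureg : ContDiff ℝ 2 u :=
    ((starL' ℝ : ℂ ≃L[ℝ] ℂ) : ℂ →L[ℝ] ℂ).contDiff.comp hv₀reg
  -- vanishing of w₀ and its derivatives off Ω
  have hw0 : ∀ x, x ∉ Ω → w₀ x = 0 := fun x hx =>
    image_eq_zero_of_notMem_tsupport (fun h => hx (hw₀in h))
  have hlapw0 : ∀ x, x ∉ Ω → lap3 w₀ x = 0 := by
    intro x hx
    unfold lap3
    refine Finset.sum_eq_zero fun i _ => ?_
    have hts : tsupport (fun y => fderiv ℝ w₀ y (EuclideanSpace.single i 1))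
        ⊆ tsupport w₀ := by
      refine closure_minimal ?_ isClosed_closure
      intro y hy
      have : fderiv ℝ w₀ y ≠ 0 := fun h => hy (by simp [h])
      exact support_fderiv_subset ℝ (by simpa [Function.mem_support] using this)
    have hx' : x ∉ tsupport (fun y => fderiv ℝ w₀ y (EuclideanSpace.single i 1)) :=
      fun h => hx (hw₀in (hts h))
    rw [fderiv_of_notMem_tsupport ℝ hx']
    rfl
  -- the auxiliary function G
  set G : E3 → ℂ := fun x => (lap3 w₀ x + (ρ : ℂ) * w₀ x) * u x with hG
  -- continuity / support facts
  have hucont : Continuous u := hureg.continuous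
  have hT : ∀ i : Fin 3, Continuous (fun x =>
      fderiv ℝ (fun y => fderiv ℝ w₀ y (EuclideanSpace.single i 1)) x
        (EuclideanSpace.single i 1)) := fun i => fderiv2_apply_continuous hw₀reg _
  have hTc : ∀ i : Fin 3, HasCompactSupport (fun x =>
      fderiv ℝ (fun y => fderiv ℝ w₀ y (EuclideanSpace.single i 1)) x
        (EuclideanSpace.single i 1)) := fun i =>
    (hw₀supp.fderiv_apply ℝ _).fderiv_apply ℝ _
  have hTu_int : ∀ i : Fin 3, Integrable (fun x =>
      fderiv ℝ (fun y => fderiv ℝ w₀ y (EuclideanSpace.single i 1)) x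
        (EuclideanSpace.single i 1) * u x) := fun i =>
    csupp_mul_int (hT i) hucont (hTc i)
  have hwu_int : Integrable (fun x => w₀ x * u x) :=
    csupp_mul_int hw₀reg.continuous hucont hw₀supp
  -- Step C : ∫ G = 0 over the whole space
  have hGzero : (∫ x, G x) = 0 := by
    have hGrw : ∀ x, G x = (∑ i : Fin 3,
        fderiv ℝ (fun y => fderiv ℝ w₀ y (EuclideanSpace.single i 1)) x
          (EuclideanSpace.single i 1) * u x) + (ρ : ℂ) * (w₀ x * u x) := by
      intro x
      simp only [hG, lap3, add_mul, Finset.sum_mul, mul_assoc]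
    calc (∫ x, G x)
        = (∑ i : Fin 3, ∫ x,
            fderiv ℝ (fun y => fderiv ℝ w₀ y (EuclideanSpace.single i 1)) x
              (EuclideanSpace.single i 1) * u x) + (ρ : ℂ) * ∫ x, w₀ x * u x := by
          rw [show (fun x => G x) = fun x => (∑ i : Fin 3,
              fderiv ℝ (fun y => fderiv ℝ w₀ y (EuclideanSpace.single i 1)) x
                (EuclideanSpace.single i 1) * u x) + (ρ : ℂ) * (w₀ x * u x)
            from funext hGrw]
          rw [integral_add (integrable_finset_sum _ fun i _ => hTu_int i)
            (hwu_int.const_mul _), integral_finset_sum _ fun i _ => hTu_int i,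
            integral_const_mul]
      _ = (∑ i : Fin 3, ∫ x, w₀ x *
            fderiv ℝ (fun y => fderiv ℝ u y (EuclideanSpace.single i 1)) x
              (EuclideanSpace.single i 1)) + (ρ : ℂ) * ∫ x, w₀ x * u x := by
          congr 1
          exact Finset.sum_congr rfl fun i _ => ibp2 hw₀reg hw₀supp hureg _
      _ = ∫ x, w₀ x * (lap3 u x + (ρ : ℂ) * u x) := by
          rw [← integral_finset_sum _ (fun i _ =>
              csupp_mul_int hw₀reg.continuous (fderiv2_apply_continuous hureg _)
                hw₀supp),
            ← integral_const_mul,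
            ← integral_add (integrable_finset_sum _ fun i _ =>
              csupp_mul_int hw₀reg.continuous (fderiv2_apply_continuous hureg _)
                hw₀supp)
              (hwu_int.const_mul _)]
          congr 1
          funext x
          simp only [lap3, mul_add, Finset.mul_sum, mul_left_comm]
      _ = 0 := by
          rw [show (fun x => w₀ x * (lap3 u x + (ρ : ℂ) * u x)) = fun _ => (0 : ℂ)
            from ?_]
          · simp
          funext x
          by_cases hx : x ∈ Ω
          · have h2 := hpde2 x hx
            have : lap3 u x + (ρ : ℂ) * u x = 0 := by
              rw [hu]
              simp only
              rw [lap3_star]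
              have : star (lap3 v₀ x) + (ρ : ℂ) * star (v₀ x)
                  = star (lap3 v₀ x + (ρ : ℂ) * v₀ x) := by
                simp [star_add, star_mul']
              rw [this, h2, star_zero]
            rw [this, mul_zero]
          · rw [hw0 x hx, zero_mul]
  -- Step B : the set integral of G equals the full integral
  have hGΩ : (∫ x in Ω, G x) = ∫ x, G x := by
    apply setIntegral_eq_integral_of_forall_compl_eq_zero
    intro x hx
    rw [hG]
    simp only
    rw [hw0 x hx, hlapw0 x hx]
    simp
  -- Step A : pointwise identity on Ω
  have hk2 : ((k₀ : ℂ) ^ 2) ≠ 0 := by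
    simp [pow_eq_zero_iff, Complex.ofReal_eq_zero, hk₀.ne']
  have hρc : ((k₀ : ℂ)) ^ 2 * (nb : ℂ) = (ρ : ℂ) := by
    exact_mod_cast congrArg (fun t : ℝ => (t : ℂ)) hnb
  have hptwise : ∀ x ∈ Ω,
      (k₀ : ℂ) ^ 2 * (((n x - nb : ℝ) : ℂ) * (v₀ x + w₀ x) * starRingEnd ℂ (v₀ x))
        = - G x := by
    intro x hx
    have h1 := hpde1 x hx
    push_cast at h1 ⊢
    have hustar : starRingEnd ℂ (v₀ x) = u x := rfl
    rw [hustar, hG]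
    simp only
    linear_combination (u x) * h1 - (w₀ x * u x) * hρc
  -- conclude
  have : (k₀ : ℂ) ^ 2 * ∫ x in Ω,
      ((n x - nb : ℝ) : ℂ) * (v₀ x + w₀ x) * starRingEnd ℂ (v₀ x) = 0 := by
    rw [← integral_const_mul]
    have := setIntegral_congr_fun (μ := volume) hΩopen.measurableSet hptwise
    rw [this, integral_neg, hGΩ, hGzero, neg_zero]
  rcases mul_eq_zero.1 this with h | h
  · exact absurd h hk2
  · exact h
end
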